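/- Let n, m ∈ ℕ and (κ,k) ∈ L_n. If f ∈ C^m_{-1,(κ)}(0,∞), i.e. f = I^{<m>}_{(κ)} φ = κ^{<m>} * φ for some φ ∈ C_{-1}(0,∞), then the m-fold sequential GFD is a right inverse of the m-fold GFI on f: (I^{<m>}_{(κ)} D^{<m>}_{(k)} f)(t) = f(t) for all t > 0. -/

import Mathlib

/-!
Since `κ * k = h_n`, associativity of the Laplace convolution on `C_{-1}` turns
`D_{(k)} (I_{(κ)} ψ)` into `(d/dt)^n (h_n * ψ)`, and `h_n * ψ` is the `n`-fold primitive of `ψ`;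
so `D_{(k)}` is a left inverse of `I_{(κ)}` on `C_{-1}`. As `C_{-1}` is closed under convolution,
`f = κ^{<m>} * φ = I_{(κ)}^m φ` with every `I_{(κ)}^j φ` in `C_{-1}`, and peeling off one
`I_{(κ)}` at a time gives `D^{<m>}_{(k)} f = φ` on `(0, ∞)`, whence
`I^{<m>}_{(κ)} D^{<m>}_{(k)} f = κ^{<m>} * φ = f`.
-/

noncomputable section

/-- Laplace convolution `(f*g)(t) = ∫_0^t f(t-τ) g(τ) dτ`. -/
def conv (f g : ℝ → ℝ) : ℝ → ℝ := fun t => ∫ τ in (0:ℝ)..t, f (t - τ) * g τ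

/-- The space `C_{-1}(0,∞)`: functions of the form `t^q f₁(t)` with `q > -1`,
`f₁` continuous on `[0,∞)`. -/
def Cm1 (f : ℝ → ℝ) : Prop :=
  ∃ q : ℝ, -1 < q ∧ ∃ f₁ : ℝ → ℝ, ContinuousOn f₁ (Set.Ici 0) ∧
    ∀ t : ℝ, 0 < t → f t = t ^ q * f₁ t

/-- The subspace `C_{-1,0}(0,∞)`: as above with `-1 < q < 0`. -/
def Cm10 (f : ℝ → ℝ) : Prop :=
  ∃ q : ℝ, -1 < q ∧ q < 0 ∧ ∃ f₁ : ℝ → ℝ, ContinuousOn f₁ (Set.Ici 0) ∧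
    ∀ t : ℝ, 0 < t → f t = t ^ q * f₁ t

/-- `h_p(t) = t^(p-1)/Γ(p)`. -/
def hker (p : ℝ) : ℝ → ℝ := fun t => t ^ (p - 1) / Real.Gamma p

/-- The Sonine kernel class `L_n`: `κ ∈ C_{-1}`, `k ∈ C_{-1,0}`, and
`(κ*k)(t) = h_n(t)` for all `t > 0`. -/
def SonineL (n : ℕ) (κ k : ℝ → ℝ) : Prop :=
  Cm1 κ ∧ Cm10 k ∧ ∀ t : ℝ, 0 < t → conv κ k t = hker n t

/-- The general fractional integral `(I_{(κ)} f)(t) = (κ*f)(t)`. -/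
def GFI (κ f : ℝ → ℝ) : ℝ → ℝ := conv κ f

/-- The general fractional derivative of Riemann–Liouville type
`(D_{(k)} f)(t) = (d^n/dt^n)(k*f)(t)`. -/
def GFD (n : ℕ) (k f : ℝ → ℝ) : ℝ → ℝ := iteratedDeriv n (conv k f)

/-- Convolution powers: `g^{<1>} = g`, `g^{<j+1>} = g * g^{<j>}` (and `g^{<0>} = 1`). -/
def convPow (g : ℝ → ℝ) : ℕ → ℝ → ℝ
  | 0 => fun _ => 1
  | 1 => g
  | (j + 2) => conv g (convPow g (j + 1))

open MeasureTheory Set Filter intervalIntegral Convolution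
open ContinuousLinearMap (mul)

variable {f g p ψ : ℝ → ℝ}

lemma Cm10.cm1 (hf : Cm10 f) : Cm1 f :=
  let ⟨q, hq, _, hf⟩ := hf
  ⟨q, hq, hf⟩

lemma cm1_rpow {q : ℝ} (hq : -1 < q) : Cm1 fun t => t ^ q :=
  ⟨q, hq, fun _ => 1, continuousOn_const, fun _ _ => (mul_one _).symm⟩

lemma cm1_hker {x : ℝ} (hx : 0 < x) : Cm1 (hker x) :=
  ⟨x - 1, by linarith, fun _ => (Real.Gamma x)⁻¹, continuousOn_const, fun _ _ => div_eq_mul_inv _ _⟩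

namespace Cm1

lemma exists_continuous (hf : Cm1 f) :
    ∃ q : ℝ, -1 < q ∧ ∃ f₁ : ℝ → ℝ, Continuous f₁ ∧ ∀ t, 0 < t → f t = t ^ q * f₁ t := by
  obtain ⟨q, hq, f₁, hf₁, hf_eq⟩ := hf
  refine ⟨q, hq, fun t => f₁ (max 0 t),
    hf₁.comp_continuous (by fun_prop) fun t => le_max_left 0 t, fun t ht => ?_⟩
  simp only [hf_eq t ht, max_eq_right ht.le]

lemma norm (hf : Cm1 f) : Cm1 fun t => ‖f t‖ := by
  obtain ⟨q, hq, f₁, hf₁, hf_eq⟩ := hf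
  refine ⟨q, hq, fun t => ‖f₁ t‖, hf₁.norm, fun t ht => ?_⟩
  show ‖f t‖ = _
  rw [hf_eq t ht, norm_mul, Real.norm_of_nonneg (Real.rpow_nonneg ht.le q)]

lemma continuousOn (hf : Cm1 f) : ContinuousOn f (Ioi 0) := by
  obtain ⟨q, -, f₁, hf₁, hf_eq⟩ := hf.exists_continuous
  refine ContinuousOn.congr (fun t ht => ?_) fun t ht => hf_eq t ht
  exact ((Real.continuousAt_rpow_const t q (Or.inl (ne_of_gt ht))).mul
    hf₁.continuousAt).continuousWithinAt

lemma intervalIntegrable (hf : Cm1 f) {a b : ℝ} (ha : 0 ≤ a) (hb : 0 ≤ b) :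
    IntervalIntegrable f volume a b := by
  obtain ⟨q, hq, f₁, hf₁, hf_eq⟩ := hf.exists_continuous
  refine ((intervalIntegrable_rpow' hq).mul_continuousOn hf₁.continuousOn).congr ?_
  exact fun t ht => (hf_eq t ((le_min ha hb).trans_lt ht.1)).symm

lemma intervalIntegrable_conv_integrand (hf : Cm1 f) (hg : Cm1 g) {t : ℝ} (ht : 0 < t) :
    IntervalIntegrable (fun τ => f (t - τ) * g τ) volume 0 t := by
  have ht2 : 0 ≤ t / 2 := by positivity
  refine IntervalIntegrable.trans (b := t / 2) ?_ ?_
  · refine (hg.intervalIntegrable le_rfl ht2).continuousOn_mul ?_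
    refine hf.continuousOn.comp (by fun_prop) fun τ hτ => ?_
    rw [uIcc_of_le ht2] at hτ
    simp only [mem_Ioi, sub_pos]
    linarith [hτ.2]
  · have hf' := (hf.intervalIntegrable le_rfl ht2).comp_sub_left t
    rw [show t - t / 2 = t / 2 by ring, sub_zero] at hf'
    refine hf'.symm.mul_continuousOn (hg.continuousOn.mono fun τ hτ => ?_)
    rw [uIcc_of_le (by linarith)] at hτ
    simp only [mem_Ioi]
    linarith [hτ.1]

end Cm1

lemma continuous_intervalIntegral_mul {w : ℝ → ℝ} {G : ℝ → ℝ → ℝ} {a b : ℝ}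
    (hw : IntervalIntegrable w volume a b) (hG : Continuous (Function.uncurry G)) :
    Continuous fun x => ∫ s in a..b, w s * G x s := by
  refine continuous_iff_continuousAt.2 fun x₀ => ?_
  obtain ⟨M, hM⟩ := ((isCompact_closedBall x₀ 1).prod isCompact_uIcc).exists_bound_of_continuousOn
    (f := Function.uncurry G) (s := Metric.closedBall x₀ 1 ×ˢ uIcc a b) hG.continuousOn
  refine continuousAt_of_dominated_interval (bound := fun s => ‖w s‖ * M)
    (Eventually.of_forall fun x => hw.def'.aestronglyMeasurable.mul
      (hG.comp (Continuous.prodMk_right x)).aestronglyMeasurable) ?_ (hw.norm.mul_const M)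
    (ae_of_all _ fun s _ =>
      (continuous_const.mul (hG.comp (Continuous.prodMk_left s))).continuousAt)
  filter_upwards [Metric.closedBall_mem_nhds x₀ one_pos] with x hx
  refine ae_of_all _ fun s hs => ?_
  rw [norm_mul]
  exact mul_le_mul_of_nonneg_left (hM (x, s) ⟨hx, uIoc_subset_uIcc hs⟩) (norm_nonneg _)

lemma conv_eq_rpow_mul_integral {q₁ q₂ : ℝ} {f₁ g₁ : ℝ → ℝ} (hf : ∀ t, 0 < t → f t = t ^ q₁ * f₁ t)
    (hg : ∀ t, 0 < t → g t = t ^ q₂ * g₁ t) {x : ℝ} (hx : 0 < x) :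
    conv f g x = x ^ (q₁ + q₂ + 1) *
      ∫ s in (0:ℝ)..1, ((1 - s) ^ q₁ * s ^ q₂) * (f₁ (x * (1 - s)) * g₁ (x * s)) := by
  have hintegrand : EqOn (fun s => f (x - x * s) * g (x * s)) (fun s =>
      (x ^ q₁ * x ^ q₂) * (((1 - s) ^ q₁ * s ^ q₂) * (f₁ (x * (1 - s)) * g₁ (x * s))))
      (Ioo 0 1) := by
    intro s hs
    have h1s : 0 < 1 - s := sub_pos.2 hs.2
    dsimp only
    rw [show x - x * s = x * (1 - s) by ring, hf _ (mul_pos hx h1s), hg _ (mul_pos hx hs.1),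
      Real.mul_rpow hx.le h1s.le, Real.mul_rpow hx.le hs.1.le]
    ring
  have hsubst := smul_integral_comp_mul_left (fun τ => f (x - τ) * g τ) x (a := 0) (b := 1)
  rw [mul_zero, mul_one] at hsubst
  rw [conv, ← hsubst, smul_eq_mul, integral_congr_Ioo_of_le zero_le_one hintegrand,
    intervalIntegral.integral_const_mul, Real.rpow_add hx, Real.rpow_add hx, Real.rpow_one]
  ring

lemma Cm1.conv (hf : Cm1 f) (hg : Cm1 g) : Cm1 (conv f g) := by
  obtain ⟨q₁, hq₁, f₁, hf₁, hf_eq⟩ := hf.exists_continuous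
  obtain ⟨q₂, hq₂, g₁, hg₁, hg_eq⟩ := hg.exists_continuous
  refine ⟨q₁ + q₂ + 1, by linarith, _, ?_, fun x hx => conv_eq_rpow_mul_integral hf_eq hg_eq hx⟩
  refine (continuous_intervalIntegral_mul ?_ (by fun_prop)).continuousOn
  -- the Beta weight `(1 - s) ^ q₁ * s ^ q₂` is the convolution integrand of two powers at `t = 1`
  simpa using (cm1_rpow hq₁).intervalIntegrable_conv_integrand (cm1_rpow hq₂) one_pos

lemma conv_comm (f g : ℝ → ℝ) : conv f g = conv g f := by
  funext t
  have h := integral_comp_sub_left (fun τ => g τ * f (t - τ)) t (a := 0) (b := t)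
  simp only [sub_sub_cancel, sub_self, sub_zero] at h
  simp only [conv, mul_comm (f _), h]

lemma conv_congr_left (g : ℝ → ℝ) {f f' : ℝ → ℝ} (h : EqOn f f' (Ioi 0)) :
    EqOn (conv f g) (conv f' g) (Ioi 0) := fun t ht =>
  integral_congr_Ioo_of_le (le_of_lt ht) fun τ hτ => by
    simp only [h (sub_pos.2 hτ.2 : 0 < t - τ)]

lemma conv_congr_right (f : ℝ → ℝ) {g g' : ℝ → ℝ} (h : EqOn g g' (Ioi 0)) :
    EqOn (conv f g) (conv f g') (Ioi 0) := fun t ht =>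
  integral_congr_Ioo_of_le (le_of_lt ht) fun τ hτ => by
    simp only [h (hτ.1 : 0 < τ)]

-- Extending by zero to `(-∞, 0]` turns the Laplace convolution into Mathlib's convolution on `ℝ`,
-- whose associativity (`convolution_assoc`, a Fubini argument) then transfers.
lemma indicator_mul_indicator_sub (f g : ℝ → ℝ) (x : ℝ) :
    (fun τ => mul ℝ ℝ ((Ioi 0).indicator f τ) ((Ioi 0).indicator g (x - τ))) =
      (Ioo 0 x).indicator fun τ => f τ * g (x - τ) := by
  funext τ
  by_cases h₁ : 0 < τ <;> by_cases h₂ : τ < x <;>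
    simp [h₁, h₂, sub_pos]

lemma indicator_convolution_indicator (f g : ℝ → ℝ) :
    (Ioi 0).indicator f ⋆[mul ℝ ℝ] (Ioi 0).indicator g = (Ioi 0).indicator (conv f g) := by
  funext x
  rw [convolution_def, indicator_mul_indicator_sub,
    MeasureTheory.integral_indicator measurableSet_Ioo]
  rcases le_or_gt x 0 with hx | hx
  · simp [not_lt.2 hx]
  · rw [indicator_of_mem (mem_Ioi.2 hx), conv_comm, conv, integral_of_le hx.le,
      integral_Ioc_eq_integral_Ioo]
    simp only [mul_comm (f _)]

lemma Cm1.convolutionExistsAt_indicator (hf : Cm1 f) (hg : Cm1 g) (x : ℝ) :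
    ConvolutionExistsAt ((Ioi 0).indicator f) ((Ioi 0).indicator g) x (mul ℝ ℝ) := by
  rw [ConvolutionExistsAt, indicator_mul_indicator_sub]
  refine IntegrableOn.integrable_indicator ?_ measurableSet_Ioo
  rcases le_or_gt x 0 with hx | hx
  · simp [Ioo_eq_empty (not_lt.2 hx)]
  · rw [← intervalIntegrable_iff_integrableOn_Ioo_of_le hx.le]
    simpa only [mul_comm] using hg.intervalIntegrable_conv_integrand hf hx

lemma Cm1.aestronglyMeasurable_indicator (hf : Cm1 f) :
    AEStronglyMeasurable ((Ioi 0).indicator f) :=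
  (aestronglyMeasurable_indicator_iff measurableSet_Ioi).2
    (hf.continuousOn.aestronglyMeasurable measurableSet_Ioi)

lemma conv_assoc (hf : Cm1 f) (hg : Cm1 g) (hp : Cm1 p) :
    EqOn (conv f (conv g p)) (conv (conv f g) p) (Ioi 0) := by
  intro t ht
  have key := convolution_assoc (mul ℝ ℝ) (mul ℝ ℝ) (mul ℝ ℝ) (mul ℝ ℝ)
    (fun x y z => mul_assoc x y z) (x₀ := t) hf.aestronglyMeasurable_indicator
    hg.aestronglyMeasurable_indicator hp.aestronglyMeasurable_indicator
    (ae_of_all _ (hf.convolutionExistsAt_indicator hg))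
    (ae_of_all _ fun x => by
      simpa only [norm_indicator_eq_indicator_norm] using
        hg.norm.convolutionExistsAt_indicator hp.norm x)
    (by
      simpa only [norm_indicator_eq_indicator_norm, indicator_convolution_indicator] using
        hf.norm.convolutionExistsAt_indicator (hg.norm.conv hp.norm) t)
  simpa only [indicator_convolution_indicator, indicator_of_mem ht] using key.symm

lemma conv_hker_one (g : ℝ → ℝ) (t : ℝ) : conv (hker 1) g t = ∫ τ in (0:ℝ)..t, g τ := by
  simp [conv, hker]

lemma conv_hker_one_hker {x : ℝ} (hx : 0 < x) : conv (hker 1) (hker x) = hker (x + 1) := by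
  funext t
  simp only [conv_hker_one, hker]
  rw [intervalIntegral.integral_div,
    integral_rpow (Or.inl (by linarith)), sub_add_cancel, add_sub_cancel_right,
    Real.zero_rpow hx.ne', Real.Gamma_add_one hx.ne']
  field_simp
  simp

lemma hasDerivAt_conv_hker_one (hg : Cm1 g) {t : ℝ} (ht : 0 < t) :
    HasDerivAt (conv (hker 1) g) (g t) t := by
  simp only [funext (conv_hker_one g)]
  exact integral_hasDerivAt_right (hg.intervalIntegrable le_rfl ht.le)
    (hg.continuousOn.stronglyMeasurableAtFilter isOpen_Ioi t ht)
    (hg.continuousOn.continuousAt (Ioi_mem_nhds ht))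

lemma hasDerivAt_conv_hker_add_one (hψ : Cm1 ψ) {x t : ℝ} (hx : 0 < x) (ht : 0 < t) :
    HasDerivAt (conv (hker (x + 1)) ψ) (conv (hker x) ψ t) t := by
  have hassoc : conv (hker (x + 1)) ψ =ᶠ[nhds t] conv (hker 1) (conv (hker x) ψ) := by
    rw [← conv_hker_one_hker hx]
    exact eventuallyEq_of_mem (Ioi_mem_nhds ht)
      (conv_assoc (cm1_hker one_pos) (cm1_hker hx) hψ).symm
  exact (hasDerivAt_conv_hker_one ((cm1_hker hx).conv hψ) ht).congr_of_eventuallyEq hassoc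

lemma iteratedDeriv_conv_hker (hψ : Cm1 ψ) {n : ℕ} (hn : 1 ≤ n) :
    EqOn (iteratedDeriv n (conv (hker n) ψ)) ψ (Ioi 0) := by
  induction n, hn using Nat.le_induction with
  | base => exact fun t ht => by simpa using (hasDerivAt_conv_hker_one hψ ht).deriv
  | succ n hn ih =>
    have hderiv : EqOn (deriv (conv (hker (n + 1 : ℕ)) ψ)) (conv (hker n) ψ) (Ioi 0) :=
      fun t ht => by
        push_cast
        exact (hasDerivAt_conv_hker_add_one hψ (by exact_mod_cast hn) ht).deriv
    rw [iteratedDeriv_succ']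
    exact (hderiv.iteratedDeriv_of_isOpen isOpen_Ioi n).trans ih

lemma convPow_succ (g : ℝ → ℝ) {m : ℕ} (hm : 1 ≤ m) : convPow g (m + 1) = conv g (convPow g m) := by
  obtain ⟨j, rfl⟩ := Nat.exists_eq_add_of_le' hm
  rfl

lemma Cm1.convPow {κ : ℝ → ℝ} (hκ : Cm1 κ) {m : ℕ} (hm : 1 ≤ m) : Cm1 (convPow κ m) := by
  induction m, hm using Nat.le_induction with
  | base => exact hκ
  | succ m hm ih => rw [convPow_succ κ hm]; exact hκ.conv ih

lemma Cm1.iterate_GFI {κ : ℝ → ℝ} (hκ : Cm1 κ) (hψ : Cm1 ψ) (m : ℕ) : Cm1 ((GFI κ)^[m] ψ) := by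
  induction m with
  | zero => exact hψ
  | succ m ih => rw [Function.iterate_succ_apply']; exact hκ.conv ih

lemma conv_convPow_eqOn_iterate_GFI {κ : ℝ → ℝ} (hκ : Cm1 κ) (hψ : Cm1 ψ) {m : ℕ} (hm : 1 ≤ m) :
    EqOn (conv (convPow κ m) ψ) ((GFI κ)^[m] ψ) (Ioi 0) := by
  induction m, hm using Nat.le_induction with
  | base => exact fun _ _ => rfl
  | succ m hm ih =>
    rw [convPow_succ κ hm, Function.iterate_succ_apply']
    exact (conv_assoc hκ (hκ.convPow hm) hψ).symm.trans (conv_congr_right κ ih)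

lemma GFD_congr (n : ℕ) (k : ℝ → ℝ) (h : EqOn f g (Ioi 0)) :
    EqOn (GFD n k f) (GFD n k g) (Ioi 0) :=
  (conv_congr_right k h).iteratedDeriv_of_isOpen isOpen_Ioi n

lemma iterate_GFD_congr (n : ℕ) (k : ℝ → ℝ) (j : ℕ) (h : EqOn f g (Ioi 0)) :
    EqOn ((GFD n k)^[j] f) ((GFD n k)^[j] g) (Ioi 0) := by
  induction j generalizing f g with
  | zero => exact h
  | succ j ih => exact ih (GFD_congr n k h)

namespace SonineL

variable {n : ℕ} {κ k : ℝ → ℝ}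

lemma GFD_GFI (hκk : SonineL n κ k) (hn : 1 ≤ n) (hψ : Cm1 ψ) :
    EqOn (GFD n k (GFI κ ψ)) ψ (Ioi 0) := by
  obtain ⟨hκ, hk, hκk⟩ := hκk
  have hkernel : EqOn (conv k (GFI κ ψ)) (conv (hker n) ψ) (Ioi 0) :=
    (conv_assoc hk.cm1 hκ hψ).trans
      (conv_congr_left ψ fun t ht => by rw [conv_comm]; exact hκk t ht)
  exact (hkernel.iteratedDeriv_of_isOpen isOpen_Ioi n).trans (iteratedDeriv_conv_hker hψ hn)

lemma iterate_GFD_iterate_GFI (hκk : SonineL n κ k) (hn : 1 ≤ n) (hψ : Cm1 ψ) (m : ℕ) :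
    EqOn ((GFD n k)^[m] ((GFI κ)^[m] ψ)) ψ (Ioi 0) := by
  induction m with
  | zero => exact fun _ _ => rfl
  | succ m ih =>
    rw [Function.iterate_succ_apply, Function.iterate_succ_apply']
    exact (iterate_GFD_congr n k m (hκk.GFD_GFI hn (hκk.1.iterate_GFI hψ m))).trans ih

end SonineL

/-- the `m`-fold sequential GFD is a right inverse of the `m`-fold
GFI on `C^m_{-1,(κ)}(0,∞) = I^{<m>}_{(κ)}(C_{-1}(0,∞))`. -/
theorem seq_GFD_right_inverse_mfold_GFI (n m : ℕ) (hn : 0 < n) (hm : 0 < m)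
    (κ k : ℝ → ℝ) (hκk : SonineL n κ k) (f φ : ℝ → ℝ) (hφ : Cm1 φ)
    (hf : ∀ t : ℝ, 0 < t → f t = conv (convPow κ m) φ t) :
    ∀ t : ℝ, 0 < t → conv (convPow κ m) ((GFD n k)^[m] f) t = f t := by
  have hf_iterate : EqOn f ((GFI κ)^[m] φ) (Ioi 0) := fun t ht =>
    (hf t ht).trans (conv_convPow_eqOn_iterate_GFI hκk.1 hφ hm ht)
  have hD : EqOn ((GFD n k)^[m] f) φ (Ioi 0) :=
    (iterate_GFD_congr n k m hf_iterate).trans (hκk.iterate_GFD_iterate_GFI hn hφ m)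
  intro t ht
  rw [conv_congr_right _ hD ht, hf t ht]
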